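/- (Intrinsic Hessian of the end-point map on its kernel.) For all γ, φ ∈ H¹(0) with d_γE(φ) = 0: d²_γE(φ,φ) = ( 0, ∫₀¹ ⁅φ,φ̇⁆ dt, ∫₀¹ ⁅φ,⁅φ,γ̇⁆⁆ dt + ∫₀¹ ⁅γ − ½γ(1), ⁅φ,φ̇⁆⁆ dt ) ∈ V¹ ⊕ V² ⊕ V³. -/

import Mathlib

open MeasureTheory Set intervalIntegral

noncomputable section

variable {𝕓 : Type*} [NormedAddCommGroup 𝕓] [InnerProductSpace ℝ 𝕓] [FiniteDimensional ℝ 𝕓]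

/-- The space `H¹(0)` of curves `γ : [0,1] → V¹` with `γ(t) = ∫₀ᵗ γ̇(s) ds` for a
square-integrable `γ̇` with values in `V¹`.  A curve is identified with its derivative
`γ̇ : ℝ → 𝕓`; the curve itself is recovered by `curve`. -/
def H1zero (V1 : Submodule ℝ 𝕓) : Submodule ℝ (ℝ → 𝕓) where
  carrier := {g | (∀ t, g t ∈ V1) ∧ MemLp g 2 (volume.restrict (Icc (0:ℝ) 1))}
  add_mem' := fun hg hh => ⟨fun t => V1.add_mem (hg.1 t) (hh.1 t), hg.2.add hh.2⟩
  zero_mem' := ⟨fun _ => V1.zero_mem, MemLp.zero⟩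
  smul_mem' := fun c _ hg => ⟨fun t => V1.smul_mem c (hg.1 t), hg.2.const_smul c⟩

/-- The curve associated to a derivative: `γ(t) = ∫₀ᵗ γ̇(s) ds`. -/
def curve (g : ℝ → 𝕓) (t : ℝ) : 𝕓 := ∫ s in (0:ℝ)..t, g s

variable (br : 𝕓 →ₗ[ℝ] 𝕓 →ₗ[ℝ] 𝕓)

/-- First layer of the end-point map: `F¹(γ) = γ(1)`. -/
def F1 (g : ℝ → 𝕓) : 𝕓 := curve g 1

/-- The second layer `γ²(t) = ½∫₀ᵗ ⁅γ,γ̇⁆`. -/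
def curve2 (g : ℝ → 𝕓) (t : ℝ) : 𝕓 := (2:ℝ)⁻¹ • ∫ s in (0:ℝ)..t, br (curve g s) (g s)

/-- Second layer of the end-point map: `F²(γ) = ½∫₀¹ ⁅γ,γ̇⁆`. -/
def F2 (g : ℝ → 𝕓) : 𝕓 := curve2 br g 1

/-- Third layer of the end-point map:
`F³(γ) = ∫₀¹ (½(⁅γ,γ̇²⁆ + ⁅γ²,γ̇⁆) − (1/6)⁅γ,⁅γ,γ̇⁆⁆)`, with `γ̇² = ½⁅γ,γ̇⁆`. -/
def F3 (g : ℝ → 𝕓) : 𝕓 :=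
  ∫ t in (0:ℝ)..1,
    ((2:ℝ)⁻¹ • (br (curve g t) ((2:ℝ)⁻¹ • br (curve g t) (g t)) + br (curve2 br g t) (g t))
      - (6:ℝ)⁻¹ • br (curve g t) (br (curve g t) (g t)))

/-- The end-point map `E(γ) = (F¹(γ), F²(γ), F³(γ)) ∈ V¹ ⊕ V² ⊕ V³`. -/
def Emap (g : ℝ → 𝕓) : 𝕓 × 𝕓 × 𝕓 := (F1 g, F2 br g, F3 br g)

/-- `d_γF¹(φ)`. -/
def dF1 (γ φ : ℝ → 𝕓) : 𝕓 := deriv (fun ε : ℝ => F1 (γ + ε • φ)) 0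

/-- `d_γF²(φ)`. -/
def dF2 (γ φ : ℝ → 𝕓) : 𝕓 := deriv (fun ε : ℝ => F2 br (γ + ε • φ)) 0

/-- `d_γF³(φ)`. -/
def dF3 (γ φ : ℝ → 𝕓) : 𝕓 := deriv (fun ε : ℝ => F3 br (γ + ε • φ)) 0

/-- The differential of the end-point map, `d_γE(φ) = (d/dε)|₀ E(γ + εφ)`. -/
def dE (γ φ : ℝ → 𝕓) : 𝕓 × 𝕓 × 𝕓 := deriv (fun ε : ℝ => Emap br (γ + ε • φ)) 0

/-- The Hessian of the end-point map, `d²_γE(φ,φ) = (d²/dε²)|₀ E(γ + εφ)`. -/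
def d2E (γ φ : ℝ → 𝕓) : 𝕓 × 𝕓 × 𝕓 := iteratedDeriv 2 (fun ε : ℝ => Emap br (γ + ε • φ)) 0

/-- The energy `L(γ) = ½∫₀¹ |γ̇|²`. -/
def energy (g : ℝ → 𝕓) : ℝ := (2:ℝ)⁻¹ * ∫ t in (0:ℝ)..1, ‖g t‖^2

/-- `γ` is a local minimizer of the energy subject to the end-point constraint. -/
def IsLocMin (V1 : Submodule ℝ 𝕓) (γ : ℝ → 𝕓) : Prop :=
  γ ∈ H1zero V1 ∧ ∃ ε > 0, ∀ h ∈ H1zero V1, Emap br h = Emap br γ →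
    (∫ t in (0:ℝ)..1, ‖γ t - h t‖^2) < ε → energy γ ≤ energy h

/-- `γ` is singular: the image of `d_γE` spans a proper subspace of `𝔟 = V¹ ⊕ V² ⊕ V³`. -/
def IsSingular (V1 V2 V3 : Submodule ℝ 𝕓) (γ : ℝ → 𝕓) : Prop :=
  Submodule.span ℝ {x : 𝕓 × 𝕓 × 𝕓 | ∃ φ ∈ H1zero V1, dE br γ φ = x}
    < V1.prod (V2.prod V3)

/-- A triple of linear functionals acting componentwise on `V¹ ⊕ V² ⊕ V³`. -/
def pairL (l1 l2 l3 : 𝕓 →ₗ[ℝ] ℝ) (x : 𝕓 × 𝕓 × 𝕓) : ℝ := l1 x.1 + l2 x.2.1 + l3 x.2.2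

/-- `𝔟` is a Carnot algebra of step at most 3 with layers `V¹, V², V³` and Lie bracket `br`:
the layers form an internal direct sum, `V² = span ⁅V¹,V¹⁆`, `V³ = span ⁅V¹,V²⁆`,
`⁅V¹,V³⁆ = 0`, and `br` is alternating and satisfies the Jacobi identity. -/
def CarnotStep3 (V1 V2 V3 : Submodule ℝ 𝕓) : Prop :=
  DirectSum.IsInternal ![V1, V2, V3] ∧
  V2 = Submodule.span ℝ {x | ∃ a ∈ V1, ∃ b ∈ V1, x = br a b} ∧
  V3 = Submodule.span ℝ {x | ∃ a ∈ V1, ∃ ξ ∈ V2, x = br a ξ} ∧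
  (∀ a ∈ V1, ∀ ζ ∈ V3, br a ζ = 0) ∧
  (∀ x, br x x = 0) ∧
  (∀ x y z, br x (br y z) + br y (br z x) + br z (br x y) = 0)

/-- The quadratic form `Q` restricted to `K` has finite Morse index: there is a uniform
bound on the dimension of subspaces contained in `K` on which `Q` is negative definite. -/
def HasFiniteMorseIndexOn (Q : (ℝ → 𝕓) → ℝ) (K : Set (ℝ → 𝕓)) : Prop :=
  ∃ N : ℕ, ∀ P : Submodule ℝ (ℝ → 𝕓), (P : Set (ℝ → 𝕓)) ⊆ K →
    (∀ φ ∈ P, φ ≠ 0 → Q φ < 0) → Module.rank ℝ P ≤ N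

/-- `γ` is a normal geodesic: there are multipliers `λ², λ³` such that
`∫₀¹ (⟨γ̇,φ̇⟩ + λ²⁅φ,γ̇⁆ + λ³⁅γ − ½γ(1), ⁅φ,γ̇⁆⁆) dt = 0` for all `φ ∈ H¹(0)` with `φ(1) = 0`. -/
def IsNormal (V1 : Submodule ℝ 𝕓) (γ : ℝ → 𝕓) : Prop :=
  ∃ l2 l3 : 𝕓 →ₗ[ℝ] ℝ,
    ∀ φ ∈ H1zero V1, curve φ 1 = 0 →
      (∫ t in (0:ℝ)..1,
        ((inner ℝ (γ t) (φ t) : ℝ) + l2 (br (curve φ t) (γ t))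
          + l3 (br (curve γ t - (2:ℝ)⁻¹ • curve γ 1) (br (curve φ t) (γ t))))) = 0

/-!
Along the line `γ + εφ` the end-point map is a cubic polynomial in `ε`: `F¹` is linear, `F²` is
the quadratic form of `(u, v) ↦ ½∫⁅u, v̇⁆`, and `F³` is the cubic form of the trilinear map
`(u, v, w) ↦ ∫ (1/12)⁅u,⁅v,ẇ⁆⁆ + ¼⁅∫⁅u,v̇⁆, ẇ⁆`. So the Hessian is twice the `ε²`-coefficient.
For `F³` that coefficient is rewritten by integration by parts, where every boundary term at `1`
containing `φ(1)` vanishes because `φ(1)` is the first component of `d_γE(φ) = 0`. What is left is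
a combination of `I₁ = ∫⁅φ,⁅φ,γ̇⁆⁆`, `I₂ = ∫⁅φ,⁅γ,φ̇⁆⁆`, `I₃ = ∫⁅γ,⁅φ,φ̇⁆⁆` and `⁅γ(1), ∫⁅φ,φ̇⁆⁆`.
The Jacobi identity, together with one more integration by parts, gives `2I₂ = I₁ + I₃`, and then
the formula follows.
-/

section BilinearIntegration

variable {E F G : Type*} [NormedAddCommGroup E] [NormedSpace ℝ E] [NormedAddCommGroup F]
  [NormedSpace ℝ F] [NormedAddCommGroup G] [NormedSpace ℝ G]

theorem MeasureTheory.IntegrableOn.continuousOn_apply₂ (B : E →L[ℝ] F →L[ℝ] G) {u : ℝ → E}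
    {v : ℝ → F} {K : Set ℝ} (hv : IntegrableOn v K) (hu : ContinuousOn u K) (hK : IsCompact K) :
    IntegrableOn (fun t => B (u t) (v t)) K := by
  obtain ⟨C, hC⟩ := hK.exists_bound_of_continuousOn hu
  exact B.integrable_of_bilin_of_bdd_left C (hu.aestronglyMeasurable hK.measurableSet)
    (ae_restrict_of_forall_mem hK.measurableSet hC) hv

theorem MeasureTheory.IntegrableOn.apply₂_continuousOn (B : E →L[ℝ] F →L[ℝ] G) {u : ℝ → E}
    {v : ℝ → F} {K : Set ℝ} (hu : IntegrableOn u K) (hv : ContinuousOn v K) (hK : IsCompact K) :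
    IntegrableOn (fun t => B (u t) (v t)) K :=
  IntegrableOn.continuousOn_apply₂ B.flip hu hv hK

/-- Fubini on the square `(0, x]²`, split along its diagonal. -/
theorem ContinuousLinearMap.integral_apply₂_primitive_add [CompleteSpace E] [CompleteSpace F]
    [CompleteSpace G] (B : E →L[ℝ] F →L[ℝ] G) {f : ℝ → E} {g : ℝ → F} {x : ℝ} (hx : 0 ≤ x)
    (hf : IntervalIntegrable f volume 0 x) (hg : IntervalIntegrable g volume 0 x) :
    (∫ t in 0..x, B (f t) (∫ s in 0..t, g s)) + (∫ t in 0..x, B (∫ s in 0..t, f s) (g t))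
      = B (∫ t in 0..x, f t) (∫ t in 0..x, g t) := by
  set ν := volume.restrict (Ioc (0:ℝ) x)
  have hf' : IntegrableOn f (Ioc 0 x) := (intervalIntegrable_iff_integrableOn_Ioc_of_le hx).1 hf
  have hg' : IntegrableOn g (Ioc 0 x) := (intervalIntegrable_iff_integrableOn_Ioc_of_le hx).1 hg
  set H : ℝ × ℝ → G := fun z => B (f z.1) (g z.2)
  have hH : Integrable H (ν.prod ν) := hf'.op_fst_snd (by fun_prop) ⟨‖B‖, B.le_opNorm₂⟩ hg'
  set S : Set (ℝ × ℝ) := {z | z.2 ≤ z.1}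
  have hS : MeasurableSet S := measurableSet_le measurable_snd measurable_fst
  have hlower : ∫ z, S.indicator H z ∂ν.prod ν = ∫ t in 0..x, B (f t) (∫ s in 0..t, g s) := by
    rw [integral_prod _ (hH.indicator hS), intervalIntegral.integral_of_le hx]
    refine setIntegral_congr_fun measurableSet_Ioc fun t ht => ?_
    change ∫ s, (Iic t).indicator (fun s => B (f t) (g s)) s ∂ν = _
    rw [MeasureTheory.integral_indicator measurableSet_Iic,
      Measure.restrict_restrict measurableSet_Iic, Iic_inter_Ioc_of_le ht.2,
      (B (f t)).integral_comp_comm (hg'.mono_set (Ioc_subset_Ioc_right ht.2)),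
      intervalIntegral.integral_of_le ht.1.le]
  have hupper : ∫ z, Sᶜ.indicator H z ∂ν.prod ν = ∫ t in 0..x, B (∫ s in 0..t, f s) (g t) := by
    have hSc : Sᶜ = {z | z.1 < z.2} := by ext; simp [S]
    rw [hSc, integral_prod_symm _ (hH.indicator (hSc ▸ hS.compl)),
      intervalIntegral.integral_of_le hx]
    refine setIntegral_congr_fun measurableSet_Ioc fun t ht => ?_
    change ∫ s, (Iio t).indicator (fun s => B.flip (g t) (f s)) s ∂ν = _
    have hIoo : Iio t ∩ Ioc 0 x = Ioo 0 t :=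
      Set.ext fun s => ⟨fun h => ⟨h.2.1, h.1⟩, fun h => ⟨h.2, h.1, h.2.le.trans ht.2⟩⟩
    rw [MeasureTheory.integral_indicator measurableSet_Iio,
      Measure.restrict_restrict measurableSet_Iio, hIoo, ← integral_Ioc_eq_integral_Ioo,
      (B.flip (g t)).integral_comp_comm (hf'.mono_set (Ioc_subset_Ioc_right ht.2)),
      intervalIntegral.integral_of_le ht.1.le]
    rfl
  rw [← hlower, ← hupper, ← integral_add (hH.indicator hS) (hH.indicator hS.compl)]
  simp only [Set.indicator_self_add_compl_apply]
  rw [integral_prod_bilin B hf' hg', intervalIntegral.integral_of_le hx,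
    intervalIntegral.integral_of_le hx]

end BilinearIntegration

theorem MeasureTheory.IntegrableOn.intervalIntegrable_of_mem {E : Type*} [NormedAddCommGroup E]
    {v : ℝ → E} {a b c d : ℝ} (hv : IntegrableOn v (Icc a b)) (hc : c ∈ Icc a b)
    (hd : d ∈ Icc a b) : IntervalIntegrable v volume c d :=
  (hv.mono_set (uIcc_subset_Icc hc hd)).intervalIntegrable

theorem MeasureTheory.IntegrableOn.intervalIntegrable_zero_one {E : Type*}
    [NormedAddCommGroup E] {v : ℝ → E} (hv : IntegrableOn v (Icc 0 1)) :
    IntervalIntegrable v volume 0 1 :=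
  hv.intervalIntegrable_of_mem unitInterval.zero_mem unitInterval.one_mem

section Polynomials

variable {E : Type*} [NormedAddCommGroup E] [NormedSpace ℝ E]

/-- The derivative is written as a cubic in `x` again, so that `deriv_cubic_zero` applies to it. -/
theorem hasDerivAt_cubic (v₀ v₁ v₂ v₃ : E) (x : ℝ) :
    HasDerivAt (fun ε : ℝ => v₀ + ε • v₁ + ε ^ 2 • v₂ + ε ^ 3 • v₃)
      (v₁ + x • (2 : ℝ) • v₂ + x ^ 2 • (3 : ℝ) • v₃ + x ^ 3 • (0 : E)) x := by
  have h := ((((hasDerivAt_const x v₀).add ((hasDerivAt_id x).smul_const v₁)).add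
    ((hasDerivAt_pow 2 x).smul_const v₂)).add ((hasDerivAt_pow 3 x).smul_const v₃))
  exact h.congr_deriv (by module)

theorem deriv_cubic_zero (v₀ v₁ v₂ v₃ : E) :
    deriv (fun ε : ℝ => v₀ + ε • v₁ + ε ^ 2 • v₂ + ε ^ 3 • v₃) 0 = v₁ := by
  simpa using (hasDerivAt_cubic v₀ v₁ v₂ v₃ 0).deriv

theorem iteratedDeriv_two_cubic_zero (v₀ v₁ v₂ v₃ : E) :
    iteratedDeriv 2 (fun ε : ℝ => v₀ + ε • v₁ + ε ^ 2 • v₂ + ε ^ 3 • v₃) 0 = (2 : ℝ) • v₂ := by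
  rw [iteratedDeriv_succ, iteratedDeriv_one,
    funext fun x => (hasDerivAt_cubic v₀ v₁ v₂ v₃ x).deriv, deriv_cubic_zero]

theorem integral_quadratic {f₀ f₁ f₂ : ℝ → E} {a b : ℝ} (h₀ : IntervalIntegrable f₀ volume a b)
    (h₁ : IntervalIntegrable f₁ volume a b) (h₂ : IntervalIntegrable f₂ volume a b) (ε : ℝ) :
    ∫ t in a..b, (f₀ t + ε • f₁ t + ε ^ 2 • f₂ t)
      = (∫ t in a..b, f₀ t) + ε • (∫ t in a..b, f₁ t) + ε ^ 2 • ∫ t in a..b, f₂ t := by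
  have h₁' : IntervalIntegrable (fun t => ε • f₁ t) volume a b := h₁.smul ε
  have h₂' : IntervalIntegrable (fun t => ε ^ 2 • f₂ t) volume a b := h₂.smul _
  rw [integral_add (h₀.add h₁') h₂', integral_add h₀ h₁',
    intervalIntegral.integral_smul, intervalIntegral.integral_smul]

theorem integral_cubic {f₀ f₁ f₂ f₃ : ℝ → E} {a b : ℝ} (h₀ : IntervalIntegrable f₀ volume a b)
    (h₁ : IntervalIntegrable f₁ volume a b) (h₂ : IntervalIntegrable f₂ volume a b)
    (h₃ : IntervalIntegrable f₃ volume a b) (ε : ℝ) :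
    ∫ t in a..b, (f₀ t + ε • f₁ t + ε ^ 2 • f₂ t + ε ^ 3 • f₃ t)
      = (∫ t in a..b, f₀ t) + ε • (∫ t in a..b, f₁ t) + ε ^ 2 • (∫ t in a..b, f₂ t)
        + ε ^ 3 • ∫ t in a..b, f₃ t := by
  have h₀₁₂ : IntervalIntegrable (fun t => f₀ t + ε • f₁ t + ε ^ 2 • f₂ t) volume a b :=
    (h₀.add (h₁.smul ε)).add (h₂.smul _)
  have h₃' : IntervalIntegrable (fun t => ε ^ 3 • f₃ t) volume a b := h₃.smul _
  rw [integral_add h₀₁₂ h₃', integral_quadratic h₀ h₁ h₂, intervalIntegral.integral_smul]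

end Polynomials

section CurveAlgebra

omit [FiniteDimensional ℝ 𝕓]

variable {u v w : ℝ → 𝕓}

theorem continuousOn_curve (hu : IntegrableOn u (Icc 0 1)) :
    ContinuousOn (curve u) (Icc 0 1) := by
  have h := intervalIntegral.continuousOn_primitive_interval (μ := volume) (a := 0) (b := 1)
    (f := u) (by rwa [uIcc_of_le zero_le_one])
  rwa [uIcc_of_le zero_le_one] at h

theorem curve_add_smul (hu : IntegrableOn u (Icc 0 1)) (hv : IntegrableOn v (Icc 0 1)) (ε : ℝ)
    {t : ℝ} (ht : t ∈ Icc (0:ℝ) 1) : curve (u + ε • v) t = curve u t + ε • curve v t := by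
  have hv' : IntervalIntegrable (fun s => ε • v s) volume 0 t :=
    (hv.intervalIntegrable_of_mem unitInterval.zero_mem ht).smul ε
  rw [curve, curve, curve, ← intervalIntegral.integral_smul,
    ← integral_add (hu.intervalIntegrable_of_mem unitInterval.zero_mem ht) hv']
  rfl

/-- `∫₀ᵗ ⁅u, v̇⁆` in the notation of the paper, curves being given by their derivatives. -/
def bracketPrimitive (u v : ℝ → 𝕓) (t : ℝ) : 𝕓 := ∫ s in (0:ℝ)..t, br (curve u s) (v s)

theorem curve2_eq (g : ℝ → 𝕓) : curve2 br g = (2:ℝ)⁻¹ • bracketPrimitive br g g := rfl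

/-- Polarization of the integrand of `F³`: since `γ̇² = ½⁅γ,γ̇⁆`, that integrand is
`(¼ - ⅙)⁅γ,⁅γ,γ̇⁆⁆ + ¼⁅∫⁅γ,γ̇⁆, γ̇⁆`. -/
def F3Density (u v w : ℝ → 𝕓) (t : ℝ) : 𝕓 :=
  (12:ℝ)⁻¹ • br (curve u t) (br (curve v t) (w t))
    + (4:ℝ)⁻¹ • br (bracketPrimitive br u v t) (w t)

theorem F3_eq_integral_F3Density (g : ℝ → 𝕓) :
    F3 br g = ∫ t in (0:ℝ)..1, F3Density br g g g t := by
  refine intervalIntegral.integral_congr fun t _ => ?_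
  simp only [F3Density, curve2_eq, Pi.smul_apply, map_smul, LinearMap.smul_apply]
  module

theorem integral_bracket_swap (hB : br.IsAlt) (f g : ℝ → 𝕓) (a b : ℝ) :
    ∫ t in a..b, br (f t) (g t) = -∫ t in a..b, br (g t) (f t) := by
  rw [← intervalIntegral.integral_neg]
  exact intervalIntegral.integral_congr fun t _ => (hB.neg _ _).symm

end CurveAlgebra

section Bracket

variable {u v w : ℝ → 𝕓}

def bracketCLM : 𝕓 →L[ℝ] 𝕓 →L[ℝ] 𝕓 :=
  LinearMap.toContinuousLinearMap (LinearMap.toContinuousLinearMap.toLinearMap ∘ₗ br)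

theorem ContinuousOn.integrableOn_bracket {f g : ℝ → 𝕓} (hf : ContinuousOn f (Icc 0 1))
    (hg : IntegrableOn g (Icc 0 1)) : IntegrableOn (fun t => br (f t) (g t)) (Icc 0 1) :=
  hg.continuousOn_apply₂ (bracketCLM br) hf isCompact_Icc

theorem MeasureTheory.IntegrableOn.bracket_continuousOn {f g : ℝ → 𝕓}
    (hf : IntegrableOn f (Icc 0 1)) (hg : ContinuousOn g (Icc 0 1)) :
    IntegrableOn (fun t => br (f t) (g t)) (Icc 0 1) :=
  hf.apply₂_continuousOn (bracketCLM br) hg isCompact_Icc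

theorem ContinuousOn.bracket {f g : ℝ → 𝕓} (hf : ContinuousOn f (Icc 0 1))
    (hg : ContinuousOn g (Icc 0 1)) : ContinuousOn (fun t => br (f t) (g t)) (Icc 0 1) :=
  ((bracketCLM br).continuous.comp_continuousOn hf).clm_apply hg

theorem continuousOn_bracketPrimitive (hu : IntegrableOn u (Icc 0 1))
    (hv : IntegrableOn v (Icc 0 1)) : ContinuousOn (bracketPrimitive br u v) (Icc 0 1) :=
  continuousOn_curve ((continuousOn_curve hu).integrableOn_bracket br hv)

theorem bracketPrimitive_add_smul (hu : IntegrableOn u (Icc 0 1))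
    (hv : IntegrableOn v (Icc 0 1)) (ε : ℝ) {t : ℝ} (ht : t ∈ Icc (0:ℝ) 1) :
    bracketPrimitive br (u + ε • v) (u + ε • v) t = bracketPrimitive br u u t
      + ε • (bracketPrimitive br u v t + bracketPrimitive br v u t)
      + ε ^ 2 • bracketPrimitive br v v t := by
  have hcu := continuousOn_curve hu
  have hcv := continuousOn_curve hv
  have h0t : ∀ {f : ℝ → 𝕓}, IntegrableOn f (Icc 0 1) → IntervalIntegrable f volume 0 t :=
    fun hf => hf.intervalIntegrable_of_mem unitInterval.zero_mem ht
  rw [bracketPrimitive, bracketPrimitive, bracketPrimitive, bracketPrimitive, bracketPrimitive,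
    ← integral_add (h0t (hcu.integrableOn_bracket br hv)) (h0t (hcv.integrableOn_bracket br hu)),
    ← integral_quadratic (h0t (hcu.integrableOn_bracket br hu))
      ((h0t (hcu.integrableOn_bracket br hv)).add (h0t (hcv.integrableOn_bracket br hu)))
      (h0t (hcv.integrableOn_bracket br hv))]
  refine intervalIntegral.integral_congr fun s hs => ?_
  rw [uIcc_of_le ht.1] at hs
  simp only [curve_add_smul hu hv ε ⟨hs.1, hs.2.trans ht.2⟩, Pi.add_apply, Pi.smul_apply,
    map_add, map_smul, LinearMap.add_apply, LinearMap.smul_apply]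
  module

theorem F3Density_add_smul (hu : IntegrableOn u (Icc 0 1)) (hv : IntegrableOn v (Icc 0 1))
    (ε : ℝ) {t : ℝ} (ht : t ∈ Icc (0:ℝ) 1) :
    F3Density br (u + ε • v) (u + ε • v) (u + ε • v) t = F3Density br u u u t
      + ε • (F3Density br v u u t + F3Density br u v u t + F3Density br u u v t)
      + ε ^ 2 • (F3Density br v v u t + F3Density br v u v t + F3Density br u v v t)
      + ε ^ 3 • F3Density br v v v t := by
  simp only [F3Density, curve_add_smul hu hv ε ht, bracketPrimitive_add_smul br hu hv ε ht,
    Pi.add_apply, Pi.smul_apply, map_add, map_smul, LinearMap.add_apply, LinearMap.smul_apply]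
  module

theorem integrableOn_F3Density (hu : IntegrableOn u (Icc 0 1)) (hv : IntegrableOn v (Icc 0 1))
    (hw : IntegrableOn w (Icc 0 1)) : IntegrableOn (F3Density br u v w) (Icc 0 1) :=
  (((continuousOn_curve hu).integrableOn_bracket br
      ((continuousOn_curve hv).integrableOn_bracket br hw)).smul _).add
    (((continuousOn_bracketPrimitive br hu hv).integrableOn_bracket br hw).smul _)

theorem intervalIntegrable_F3Density (hu : IntegrableOn u (Icc 0 1))
    (hv : IntegrableOn v (Icc 0 1)) (hw : IntegrableOn w (Icc 0 1)) :
    IntervalIntegrable (F3Density br u v w) volume 0 1 :=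
  (integrableOn_F3Density br hu hv hw).intervalIntegrable_zero_one

theorem integral_F3Density (hu : IntegrableOn u (Icc 0 1)) (hv : IntegrableOn v (Icc 0 1))
    (hw : IntegrableOn w (Icc 0 1)) :
    ∫ t in (0:ℝ)..1, F3Density br u v w t
      = (12:ℝ)⁻¹ • (∫ t in (0:ℝ)..1, br (curve u t) (br (curve v t) (w t)))
        + (4:ℝ)⁻¹ • ∫ t in (0:ℝ)..1, br (bracketPrimitive br u v t) (w t) := by
  have h₁ : IntervalIntegrable (fun t => br (curve u t) (br (curve v t) (w t))) volume 0 1 :=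
    ((continuousOn_curve hu).integrableOn_bracket br
      ((continuousOn_curve hv).integrableOn_bracket br hw)).intervalIntegrable_zero_one
  have h₂ : IntervalIntegrable (fun t => br (bracketPrimitive br u v t) (w t)) volume 0 1 :=
    ((continuousOn_bracketPrimitive br hu hv).integrableOn_bracket br
      hw).intervalIntegrable_zero_one
  rw [← intervalIntegral.integral_smul, ← intervalIntegral.integral_smul]
  exact integral_add (h₁.smul _) (h₂.smul _)

theorem F3_add_smul (hu : IntegrableOn u (Icc 0 1)) (hv : IntegrableOn v (Icc 0 1)) (ε : ℝ) :
    F3 br (u + ε • v) = (∫ t in (0:ℝ)..1, F3Density br u u u t)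
      + ε • (∫ t in (0:ℝ)..1, (F3Density br v u u t + F3Density br u v u t + F3Density br u u v t))
      + ε ^ 2 • (∫ t in (0:ℝ)..1,
          (F3Density br v v u t + F3Density br v u v t + F3Density br u v v t))
      + ε ^ 3 • ∫ t in (0:ℝ)..1, F3Density br v v v t := by
  rw [F3_eq_integral_F3Density, ← integral_cubic (intervalIntegrable_F3Density br hu hu hu)
    (((intervalIntegrable_F3Density br hv hu hu).add (intervalIntegrable_F3Density br hu hv hu)).add
      (intervalIntegrable_F3Density br hu hu hv))
    (((intervalIntegrable_F3Density br hv hv hu).add (intervalIntegrable_F3Density br hv hu hv)).add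
      (intervalIntegrable_F3Density br hu hv hv))
    (intervalIntegrable_F3Density br hv hv hv)]
  refine intervalIntegral.integral_congr fun t ht => ?_
  rw [uIcc_of_le zero_le_one] at ht
  exact F3Density_add_smul br hu hv ε ht

theorem Emap_add_smul (hu : IntegrableOn u (Icc 0 1)) (hv : IntegrableOn v (Icc 0 1)) (ε : ℝ) :
    Emap br (u + ε • v) =
      (curve u 1, (2:ℝ)⁻¹ • bracketPrimitive br u u 1, ∫ t in (0:ℝ)..1, F3Density br u u u t)
      + ε • (curve v 1, (2:ℝ)⁻¹ • (bracketPrimitive br u v 1 + bracketPrimitive br v u 1),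
          ∫ t in (0:ℝ)..1, (F3Density br v u u t + F3Density br u v u t + F3Density br u u v t))
      + ε ^ 2 • ((0:𝕓), (2:ℝ)⁻¹ • bracketPrimitive br v v 1,
          ∫ t in (0:ℝ)..1, (F3Density br v v u t + F3Density br v u v t + F3Density br u v v t))
      + ε ^ 3 • ((0:𝕓), (0:𝕓), ∫ t in (0:ℝ)..1, F3Density br v v v t) := by
  rw [Emap, F1, F2, curve2_eq, curve_add_smul hu hv ε unitInterval.one_mem, Pi.smul_apply,
    bracketPrimitive_add_smul br hu hv ε unitInterval.one_mem, F3_add_smul br hu hv ε]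
  ext <;> simp only [Prod.fst_add, Prod.snd_add, Prod.smul_fst, Prod.smul_snd] <;> module

theorem bracket_curve_curve (hu : IntegrableOn u (Icc 0 1)) (hv : IntegrableOn v (Icc 0 1))
    {t : ℝ} (ht : t ∈ Icc (0:ℝ) 1) :
    br (curve u t) (curve v t)
      = ∫ s in (0:ℝ)..t, (br (u s) (curve v s) + br (curve u s) (v s)) := by
  have h0t : ∀ {f : ℝ → 𝕓}, IntegrableOn f (Icc 0 1) → IntervalIntegrable f volume 0 t :=
    fun hf => hf.intervalIntegrable_of_mem unitInterval.zero_mem ht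
  rw [integral_add (h0t (hu.bracket_continuousOn br (continuousOn_curve hv)))
    (h0t ((continuousOn_curve hu).integrableOn_bracket br hv))]
  exact ((bracketCLM br).integral_apply₂_primitive_add ht.1 (h0t hu) (h0t hv)).symm

theorem integral_bracket_bracketPrimitive (hB : br.IsAlt) (hu : IntegrableOn u (Icc 0 1))
    (hv : IntegrableOn v (Icc 0 1)) (hw : IntegrableOn w (Icc 0 1)) :
    ∫ t in (0:ℝ)..1, br (bracketPrimitive br u v t) (w t)
      = br (bracketPrimitive br u v 1) (curve w 1)
        + ∫ t in (0:ℝ)..1, br (curve w t) (br (curve u t) (v t)) := by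
  have h := (bracketCLM br).integral_apply₂_primitive_add zero_le_one
    ((continuousOn_curve hu).integrableOn_bracket br hv).intervalIntegrable_zero_one
    hw.intervalIntegrable_zero_one
  change (∫ t in (0:ℝ)..1, br (br (curve u t) (v t)) (curve w t))
    + ∫ t in (0:ℝ)..1, br (bracketPrimitive br u v t) (w t)
    = br (bracketPrimitive br u v 1) (curve w 1) at h
  rw [integral_bracket_swap br hB] at h
  linear_combination (norm := module) h

theorem integral_bracket_bracket_curve_curve (hB : br.IsAlt) (hu : IntegrableOn u (Icc 0 1))
    (hv : IntegrableOn v (Icc 0 1)) (hv1 : curve v 1 = 0) :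
    ∫ t in (0:ℝ)..1, br (v t) (br (curve u t) (curve v t))
      = (∫ t in (0:ℝ)..1, br (curve v t) (br (curve v t) (u t)))
        - ∫ t in (0:ℝ)..1, br (curve v t) (br (curve u t) (v t)) := by
  have hcu := continuousOn_curve hu
  have hcv := continuousOn_curve hv
  have h₁ := hu.bracket_continuousOn br hcv
  have h₂ := hcu.integrableOn_bracket br hv
  set g : ℝ → 𝕓 := fun s => br (u s) (curve v s) + br (curve u s) (v s) with hg
  have h := (bracketCLM br).integral_apply₂_primitive_add zero_le_one
    hv.intervalIntegrable_zero_one (h₁.add h₂).intervalIntegrable_zero_one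
  change (∫ t in (0:ℝ)..1, br (v t) (∫ s in (0:ℝ)..t, g s))
    + (∫ t in (0:ℝ)..1, br (curve v t) (g t)) = br (curve v 1) _ at h
  have hprimitive : ∀ t ∈ uIcc (0:ℝ) 1,
      br (v t) (∫ s in (0:ℝ)..t, g s) = br (v t) (br (curve u t) (curve v t)) := fun t ht => by
    rw [uIcc_of_le zero_le_one] at ht
    rw [bracket_curve_curve br hu hv ht]
  have hswap : ∀ t ∈ uIcc (0:ℝ) 1, br (curve v t) (br (u t) (curve v t))
      = -br (curve v t) (br (curve v t) (u t)) := fun t _ => by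
    rw [← map_neg, hB.neg]
  rw [intervalIntegral.integral_congr hprimitive] at h
  simp only [hg, map_add] at h
  rw [hv1, map_zero, LinearMap.zero_apply,
    integral_add (hcv.integrableOn_bracket br h₁).intervalIntegrable_zero_one
      (hcv.integrableOn_bracket br h₂).intervalIntegrable_zero_one,
    intervalIntegral.integral_congr hswap, intervalIntegral.integral_neg] at h
  linear_combination (norm := module) h

theorem two_smul_integral_bracket_curve_bracket (hB : br.IsAlt)
    (hJ : ∀ x y z, br x (br y z) + br y (br z x) + br z (br x y) = 0)
    (hu : IntegrableOn u (Icc 0 1)) (hv : IntegrableOn v (Icc 0 1)) (hv1 : curve v 1 = 0) :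
    (2:ℝ) • ∫ t in (0:ℝ)..1, br (curve v t) (br (curve u t) (v t))
      = (∫ t in (0:ℝ)..1, br (curve v t) (br (curve v t) (u t)))
        + ∫ t in (0:ℝ)..1, br (curve u t) (br (curve v t) (v t)) := by
  have hcu := continuousOn_curve hu
  have hcv := continuousOn_curve hv
  have hjacobi : ∀ t ∈ uIcc (0:ℝ) 1, br (curve v t) (br (curve u t) (v t))
      = br (curve u t) (br (curve v t) (v t)) + br (v t) (br (curve u t) (curve v t)) :=
    fun t _ => by
      have h := hJ (curve v t) (curve u t) (v t)
      rw [← hB.neg (curve v t) (v t), ← hB.neg (curve u t) (curve v t), map_neg, map_neg] at h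
      linear_combination (norm := module) h
  have hsplit := intervalIntegral.integral_congr (μ := volume) hjacobi
  rw [integral_add
      (hcu.integrableOn_bracket br (hcv.integrableOn_bracket br hv)).intervalIntegrable_zero_one
    (hv.bracket_continuousOn br (hcu.bracket br hcv)).intervalIntegrable_zero_one,
    integral_bracket_bracket_curve_curve br hB hu hv hv1] at hsplit
  linear_combination (norm := module) hsplit

theorem two_smul_integral_F3Density_sq_coeff (hB : br.IsAlt)
    (hJ : ∀ x y z, br x (br y z) + br y (br z x) + br z (br x y) = 0)
    (hu : IntegrableOn u (Icc 0 1)) (hv : IntegrableOn v (Icc 0 1)) (hv1 : curve v 1 = 0) :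
    (2:ℝ) • ∫ t in (0:ℝ)..1, (F3Density br v v u t + F3Density br v u v t + F3Density br u v v t)
      = (∫ t in (0:ℝ)..1, br (curve v t) (br (curve v t) (u t)))
        + ∫ t in (0:ℝ)..1, br (curve u t - (2:ℝ)⁻¹ • curve u 1) (br (curve v t) (v t)) := by
  have hcu := continuousOn_curve hu
  have hcv := continuousOn_curve hv
  have hvv := hcv.integrableOn_bracket br hv
  have h₁ : IntervalIntegrable (fun t => br (curve u t) (br (curve v t) (v t))) volume 0 1 :=
    (hcu.integrableOn_bracket br hvv).intervalIntegrable_zero_one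
  have h₂ : IntervalIntegrable (fun t => (2:ℝ)⁻¹ • br (curve u 1) (br (curve v t) (v t)))
      volume 0 1 :=
    (continuousOn_const.integrableOn_bracket br hvv).intervalIntegrable_zero_one.smul _
  have hcomm : ∫ t in (0:ℝ)..1, br (curve u 1) (br (curve v t) (v t))
      = br (curve u 1) (bracketPrimitive br v v 1) :=
    (bracketCLM br (curve u 1)).intervalIntegral_comp_comm hvv.intervalIntegrable_zero_one
  have hend : ∫ t in (0:ℝ)..1, br (curve u t - (2:ℝ)⁻¹ • curve u 1) (br (curve v t) (v t))
      = (∫ t in (0:ℝ)..1, br (curve u t) (br (curve v t) (v t)))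
        + (2:ℝ)⁻¹ • br (bracketPrimitive br v v 1) (curve u 1) := by
    simp only [map_sub, map_smul, LinearMap.sub_apply, LinearMap.smul_apply]
    rw [intervalIntegral.integral_sub h₁ h₂, intervalIntegral.integral_smul, hcomm, ← hB.neg]
    module
  rw [integral_add ((intervalIntegrable_F3Density br hv hv hu).add
      (intervalIntegrable_F3Density br hv hu hv)) (intervalIntegrable_F3Density br hu hv hv),
    integral_add (intervalIntegrable_F3Density br hv hv hu)
      (intervalIntegrable_F3Density br hv hu hv),
    integral_F3Density br hv hv hu, integral_F3Density br hv hu hv, integral_F3Density br hu hv hv,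
    integral_bracket_bracketPrimitive br hB hv hv hu,
    integral_bracket_bracketPrimitive br hB hv hu hv,
    integral_bracket_bracketPrimitive br hB hu hv hv, hend]
  simp only [hv1, map_zero]
  linear_combination (norm := module)
    (3⁻¹ : ℝ) • two_smul_integral_bracket_curve_bracket br hB hJ hu hv hv1

end Bracket

/-- the intrinsic Hessian of the end-point map on its kernel. -/
theorem statement15 (V1 V2 V3 : Submodule ℝ 𝕓) (hC : CarnotStep3 br V1 V2 V3)
    (γ : ℝ → 𝕓) (hγ : γ ∈ H1zero V1) (φ : ℝ → 𝕓) (hφ : φ ∈ H1zero V1)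
    (h0 : dE br γ φ = 0) :
    d2E br γ φ = (0, ∫ t in (0:ℝ)..1, br (curve φ t) (φ t),
      (∫ t in (0:ℝ)..1, br (curve φ t) (br (curve φ t) (γ t)))
        + ∫ t in (0:ℝ)..1, br (curve γ t - (2:ℝ)⁻¹ • curve γ 1) (br (curve φ t) (φ t))) := by
  obtain ⟨-, -, -, -, hB, hJ⟩ := hC
  have hγI : IntegrableOn γ (Icc 0 1) := hγ.2.integrable one_le_two
  have hφI : IntegrableOn φ (Icc 0 1) := hφ.2.integrable one_le_two
  have hexpand := funext (Emap_add_smul br hγI hφI)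
  have hφ1 : curve φ 1 = 0 := by
    simpa only [dE, hexpand, deriv_cubic_zero, Prod.fst_zero] using congrArg Prod.fst h0
  rw [d2E, hexpand, iteratedDeriv_two_cubic_zero]
  refine Prod.ext (smul_zero _) (Prod.ext (smul_inv_smul₀ two_ne_zero _) ?_)
  exact two_smul_integral_F3Density_sq_coeff br hB hJ hγI hφI hφ1
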